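/- arXiv:1405.4538 — 6 statements merged into one kernel-verified Lean document; each statement's English description precedes it below -/
import Mathlib

section
/- For every (d₂,…,d_S) ∈ ℝ^{S−1}, set d₁ := 0, d_{1j} := d'_{1j}, and d_{sj} := d_s + d'_{sj} for s = 2,…,S. Then the infimum over all (μ, γ) ∈ ℝ^m × ℝ^{(S−1)m} of f(μ, γ, d) is attained and equals Σ_{i=1}^m R_i + G(d₂,…,d_S), where R_i = (1/(2σ_i²)) Σ_{s=1}^S Σ_{j=1}^{n_s} (x_{sij} − μ'_{si} − d'_{sj})². -/
open Finset

lemma sum_sq_shift {N : ℕ} (y : Fin N → ℝ) (c : ℝ) (h0 : ∑ j, y j = 0) :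
    ∑ j, (y j + c) ^ 2 = (∑ j, (y j) ^ 2) + (N : ℝ) * c ^ 2 := by
  have h : ∀ j, (y j + c) ^ 2 = (y j) ^ 2 + (2 * c) * y j + c ^ 2 := fun j => by ring
  rw [Finset.sum_congr rfl (fun j _ => h j), Finset.sum_add_distrib,
    Finset.sum_add_distrib, ← Finset.mul_sum, h0, Finset.sum_const]
  simp [Finset.card_univ, nsmul_eq_mul]

lemma expand_sum {K : ℕ} (Nv mv : Fin K → ℝ) (a : ℝ) :
    ∑ s, Nv s * (mv s - a) ^ 2 =
      (∑ s, Nv s * (mv s) ^ 2) - 2 * a * (∑ s, Nv s * mv s) + (∑ s, Nv s) * a ^ 2 := by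
  have h : ∀ s, Nv s * (mv s - a) ^ 2
      = (Nv s * (mv s) ^ 2 - (2 * a) * (Nv s * mv s)) + Nv s * a ^ 2 := fun s => by ring
  rw [Finset.sum_congr rfl (fun s _ => h s), Finset.sum_add_distrib,
    Finset.sum_sub_distrib, ← Finset.mul_sum, ← Finset.sum_mul]

/- STATEMENT 1 -/
theorem profile_likelihood_equals_G
    (S m : ℕ) (ns : Fin (S + 2) → ℕ)
    (x : (s : Fin (S + 2)) → Fin (m + 1) → Fin (ns s + 1) → ℝ)
    (σ2 α : Fin (m + 1) → ℝ)
    (hσ2 : ∀ i, 0 < σ2 i) (hα : ∀ i, 0 < α i)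
    (n : ℝ) (hn : n = ∑ s, ((ns s : ℝ) + 1))
    (d' : (s : Fin (S + 2)) → Fin (ns s + 1) → ℝ)
    (hd' : ∀ s j, d' s j = (∑ i, (x s i j - x s i 0) / σ2 i) / (∑ i, 1 / σ2 i))
    (μ' : Fin (S + 2) → Fin (m + 1) → ℝ)
    (hμ' : ∀ s i, μ' s i = (∑ j, (x s i j - d' s j)) / ((ns s : ℝ) + 1))
    (g : Fin (m + 1) → (Fin (S + 2) → ℝ) → ℝ)
    (hg : ∀ i dv, g i dv = (1 / (2 * σ2 i)) *
      ((∑ s, ((ns s : ℝ) + 1) * (μ' s i - dv s) ^ 2)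
        - (1 / n) * (∑ s, ((ns s : ℝ) + 1) * (μ' s i - dv s)) ^ 2))
    (f : (Fin (m + 1) → ℝ) → (Fin (S + 1) → Fin (m + 1) → ℝ) →
      ((s : Fin (S + 2)) → Fin (ns s + 1) → ℝ) → ℝ)
    (hf : ∀ μ γ d, f μ γ d =
      (∑ i, (1 / (2 * σ2 i)) *
        ((∑ j, (x 0 i j - μ i - d 0 j) ^ 2)
          + ∑ s : Fin (S + 1), ∑ j, (x s.succ i j - μ i - γ s i - d s.succ j) ^ 2))
      + ∑ i, (if 0 < ∑ s : Fin (S + 1), |γ s i| then α i else 0))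
    -- R_i
    (R : Fin (m + 1) → ℝ)
    (hR : ∀ i, R i = (1 / (2 * σ2 i)) * ∑ s, ∑ j, (x s i j - μ' s i - d' s j) ^ 2)
    -- fixed (d₁, d₂, …, d_S) with d₁ = 0, and the induced d_{sj}
    (dv : Fin (S + 2) → ℝ) (hdv0 : dv 0 = 0)
    (d : (s : Fin (S + 2)) → Fin (ns s + 1) → ℝ)
    (hd : ∀ s j, d s j = dv s + d' s j) :
    IsLeast {v : ℝ | ∃ (μ : Fin (m + 1) → ℝ) (γ : Fin (S + 1) → Fin (m + 1) → ℝ),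
        v = f μ γ d}
      ((∑ i, R i) + ∑ i, min (g i dv) (α i)) := by
  have hnpos : 0 < n := by
    rw [hn]
    exact Finset.sum_pos (fun s _ => by positivity) ⟨0, Finset.mem_univ 0⟩
  have hNpos : ∀ s : Fin (S + 2), (0 : ℝ) < (ns s : ℝ) + 1 := fun s => by positivity
  -- residuals sum to zero
  have he0 : ∀ i s, ∑ j, (x s i j - μ' s i - d' s j) = 0 := by
    intro i s
    have h1 : ∀ j, x s i j - μ' s i - d' s j = (x s i j - d' s j) + (-(μ' s i)) :=
      fun j => by ring
    rw [Finset.sum_congr rfl (fun j _ => h1 j), Finset.sum_add_distrib, Finset.sum_const]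
    have h2 : ∑ j, (x s i j - d' s j) = μ' s i * ((ns s : ℝ) + 1) := by
      rw [hμ' s i]
      field_simp
    rw [h2]
    simp [Finset.card_univ, nsmul_eq_mul]
    push_cast
    ring
  -- per-group decomposition
  have key : ∀ i s (a : ℝ), (∑ j, (x s i j - a - d s j) ^ 2)
      = (∑ j, (x s i j - μ' s i - d' s j) ^ 2) + ((ns s : ℝ) + 1) * (μ' s i - dv s - a) ^ 2 := by
    intro i s a
    have h1 : ∀ j, (x s i j - a - d s j) ^ 2
        = ((x s i j - μ' s i - d' s j) + (μ' s i - dv s - a)) ^ 2 := by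
      intro j; rw [hd]; ring
    rw [Finset.sum_congr rfl (fun j _ => h1 j),
      sum_sq_shift (fun j => x s i j - μ' s i - d' s j) (μ' s i - dv s - a) (he0 i s)]
    push_cast
    ring
  -- central value formula
  have hfval : ∀ (μ : Fin (m + 1) → ℝ) (γ : Fin (S + 1) → Fin (m + 1) → ℝ),
      f μ γ d = ∑ i, (R i
        + (1 / (2 * σ2 i)) * (((ns (0 : Fin (S + 2)) : ℝ) + 1) * (μ' 0 i - dv 0 - μ i) ^ 2
            + ∑ s : Fin (S + 1), ((ns s.succ : ℝ) + 1)
              * (μ' s.succ i - dv s.succ - (μ i + γ s i)) ^ 2)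
        + (if 0 < ∑ s : Fin (S + 1), |γ s i| then α i else 0)) := by
    intro μ γ
    rw [hf, ← Finset.sum_add_distrib]
    refine Finset.sum_congr rfl fun i _ => ?_
    rw [hR]
    have ks : ∀ s : Fin (S + 1), ∑ j, (x s.succ i j - μ i - γ s i - d s.succ j) ^ 2
        = (∑ j, (x s.succ i j - μ' s.succ i - d' s.succ j) ^ 2)
          + ((ns s.succ : ℝ) + 1) * (μ' s.succ i - dv s.succ - (μ i + γ s i)) ^ 2 := by
      intro s
      rw [← key i s.succ (μ i + γ s i)]
      exact Finset.sum_congr rfl fun j _ => by ring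
    rw [key i 0 (μ i), Finset.sum_congr rfl (fun s _ => ks s), Finset.sum_add_distrib,
      Fin.sum_univ_succ (f := fun s : Fin (S + 2) => ∑ j, (x s i j - μ' s i - d' s j) ^ 2)]
    ring
  -- lower bound for g
  have hgbound : ∀ i (a : ℝ), g i dv ≤ (1 / (2 * σ2 i)) *
      ∑ s : Fin (S + 2), ((ns s : ℝ) + 1) * (μ' s i - dv s - a) ^ 2 := by
    intro i a
    rw [hg, expand_sum (fun s => (ns s : ℝ) + 1) (fun s => μ' s i - dv s) a, ← hn]
    set P := ∑ s : Fin (S + 2), ((ns s : ℝ) + 1) * (μ' s i - dv s) ^ 2 with hP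
    set Q := ∑ s : Fin (S + 2), ((ns s : ℝ) + 1) * (μ' s i - dv s) with hQ
    have h2 : P - 2 * a * Q + n * a ^ 2 - (P - 1 / n * Q ^ 2) = (n * a - Q) ^ 2 / n := by
      field_simp
      ring
    have h1 : P - 1 / n * Q ^ 2 ≤ P - 2 * a * Q + n * a ^ 2 := by
      nlinarith [div_nonneg (sq_nonneg (n * a - Q)) hnpos.le]
    exact mul_le_mul_of_nonneg_left h1 (by have := hσ2 i; positivity)
  constructor
  · -- membership
    have pergene : ∀ i, ∃ (a : ℝ) (b : Fin (S + 1) → ℝ),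
        (1 / (2 * σ2 i)) * (((ns (0 : Fin (S + 2)) : ℝ) + 1) * (μ' 0 i - dv 0 - a) ^ 2
            + ∑ s : Fin (S + 1), ((ns s.succ : ℝ) + 1)
              * (μ' s.succ i - dv s.succ - (a + b s)) ^ 2)
          + (if 0 < ∑ s : Fin (S + 1), |b s| then α i else 0) = min (g i dv) (α i) := by
      intro i
      by_cases hcase : g i dv ≤ α i
      · refine ⟨(∑ s : Fin (S + 2), ((ns s : ℝ) + 1) * (μ' s i - dv s)) / n, fun _ => 0, ?_⟩
        rw [min_eq_left hcase]
        set Q := ∑ s : Fin (S + 2), ((ns s : ℝ) + 1) * (μ' s i - dv s) with hQ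
        simp only [add_zero, abs_zero, Finset.sum_const_zero, lt_self_iff_false, if_false]
        rw [← Fin.sum_univ_succ
          (f := fun s : Fin (S + 2) => ((ns s : ℝ) + 1) * (μ' s i - dv s - Q / n) ^ 2),
          hg, expand_sum (fun s => (ns s : ℝ) + 1) (fun s => μ' s i - dv s) (Q / n), ← hn,
          ← hQ]
        congr 1
        have hn0 : n ≠ 0 := ne_of_gt hnpos
        field_simp
        ring
      · push_neg at hcase
        refine ⟨μ' 0 i, fun s => μ' s.succ i - dv s.succ - μ' 0 i, ?_⟩
        rw [min_eq_right hcase.le]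
        have hz1 : μ' 0 i - dv 0 - μ' 0 i = 0 := by rw [hdv0]; ring
        have hz2 : ∑ s : Fin (S + 1), ((ns s.succ : ℝ) + 1)
            * (μ' s.succ i - dv s.succ - (μ' 0 i + (μ' s.succ i - dv s.succ - μ' 0 i))) ^ 2
            = 0 := Finset.sum_eq_zero fun s _ => by ring_nf
        have hpen : 0 < ∑ s : Fin (S + 1), |μ' s.succ i - dv s.succ - μ' 0 i| := by
          by_contra hc
          push_neg at hc
          have hsum0 : ∑ s : Fin (S + 1), |μ' s.succ i - dv s.succ - μ' 0 i| = 0 :=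
            le_antisymm hc (Finset.sum_nonneg fun s _ => abs_nonneg _)
          have hz : ∀ s : Fin (S + 1), μ' s.succ i - dv s.succ - μ' 0 i = 0 := by
            intro s
            have := (Finset.sum_eq_zero_iff_of_nonneg (fun s _ => abs_nonneg _)).mp hsum0 s
              (Finset.mem_univ s)
            exact abs_eq_zero.mp this
          have hconst : ∀ s : Fin (S + 2), μ' s i - dv s = μ' 0 i := by
            intro s
            refine Fin.cases ?_ ?_ s
            · rw [hdv0]; ring
            · intro t
              have := hz t
              linarith
          have hg0 : g i dv = 0 := by
            rw [hg]
            have e1 : ∑ s : Fin (S + 2), ((ns s : ℝ) + 1) * (μ' s i - dv s) ^ 2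
                = n * (μ' 0 i) ^ 2 := by
              rw [hn, Finset.sum_mul]
              exact Finset.sum_congr rfl fun s _ => by rw [hconst s]
            have e2 : ∑ s : Fin (S + 2), ((ns s : ℝ) + 1) * (μ' s i - dv s)
                = n * (μ' 0 i) := by
              rw [hn, Finset.sum_mul]
              exact Finset.sum_congr rfl fun s _ => by rw [hconst s]
            have e3 : n * (μ' 0 i) ^ 2 - 1 / n * (n * (μ' 0 i)) ^ 2 = 0 := by
              have hn0 : n ≠ 0 := ne_of_gt hnpos
              field_simp
              ring
            rw [e1, e2, e3, mul_zero]
          linarith [hα i]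
        beta_reduce
        rw [if_pos hpen, hz1, hz2]
        ring_nf
    choose a b hab using pergene
    refine ⟨a, fun s i => b i s, ?_⟩
    rw [hfval a (fun s i => b i s), ← Finset.sum_add_distrib]
    refine Finset.sum_congr rfl fun i _ => ?_
    beta_reduce
    rw [← hab i]
    ring
  · -- lower bound
    rintro v ⟨μ, γ, rfl⟩
    rw [hfval μ γ, ← Finset.sum_add_distrib]
    refine Finset.sum_le_sum fun i _ => ?_
    by_cases hpen : 0 < ∑ s : Fin (S + 1), |γ s i|
    · rw [if_pos hpen]
      have h2 : (0 : ℝ) ≤ (1 / (2 * σ2 i)) *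
          (((ns (0 : Fin (S + 2)) : ℝ) + 1) * (μ' 0 i - dv 0 - μ i) ^ 2
            + ∑ s : Fin (S + 1), ((ns s.succ : ℝ) + 1)
              * (μ' s.succ i - dv s.succ - (μ i + γ s i)) ^ 2) := by
        have := hσ2 i
        positivity
      have h3 : min (g i dv) (α i) ≤ α i := min_le_right _ _
      linarith
    · rw [if_neg hpen]
      push_neg at hpen
      have habs : ∀ s : Fin (S + 1), γ s i = 0 := by
        intro s
        have hsum0 : ∑ s : Fin (S + 1), |γ s i| = 0 :=
          le_antisymm hpen (Finset.sum_nonneg fun s _ => abs_nonneg _)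
        exact abs_eq_zero.mp ((Finset.sum_eq_zero_iff_of_nonneg
          (fun s _ => abs_nonneg _)).mp hsum0 s (Finset.mem_univ s))
      have hT : ((ns (0 : Fin (S + 2)) : ℝ) + 1) * (μ' 0 i - dv 0 - μ i) ^ 2
          + ∑ s : Fin (S + 1), ((ns s.succ : ℝ) + 1)
            * (μ' s.succ i - dv s.succ - (μ i + γ s i)) ^ 2
          = ∑ s : Fin (S + 2), ((ns s : ℝ) + 1) * (μ' s i - dv s - μ i) ^ 2 := by
        rw [Fin.sum_univ_succ
          (f := fun s : Fin (S + 2) => ((ns s : ℝ) + 1) * (μ' s i - dv s - μ i) ^ 2)]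
        congr 1
        exact Finset.sum_congr rfl fun s _ => by rw [habs s]; ring_nf
      rw [hT]
      have h1 := hgbound i (μ i)
      have h2 : min (g i dv) (α i) ≤ g i dv := min_le_left _ _
      linarith
end

section
/- Fix any μ ∈ ℝ^m and γ = (γ_{si})_{s=2,…,S; i=1,…,m}, and set γ_{1i} := 0. Then the negative log-likelihood l(μ, γ, d) = Σ_{i=1}^m (1/(2σ_i²)) Σ_{s=1}^S Σ_{j=1}^{n_s} (x_{sij} − μ_i − γ_{si} − d_{sj})², viewed as a function of d = (d_{sj}), has the unique global minimizer d_{sj} = (Σ_{i=1}^m (x_{sij} − μ_i − γ_{si})/σ_i²)/(Σ_{i=1}^m 1/σ_i²). Consequently, at this minimizer d_{sj} − d_{s1} = d'_{sj} for every s and j, independently of μ and γ. -/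
/- STATEMENT 2 -/
theorem unique_minimizer_in_d
    (S m : ℕ) (ns : Fin (S + 2) → ℕ)
    (x : (s : Fin (S + 2)) → Fin (m + 1) → Fin (ns s + 1) → ℝ)
    (σ2 : Fin (m + 1) → ℝ) (hσ2 : ∀ i, 0 < σ2 i)
    (d' : (s : Fin (S + 2)) → Fin (ns s + 1) → ℝ)
    (hd' : ∀ s j, d' s j = (∑ i, (x s i j - x s i 0) / σ2 i) / (∑ i, 1 / σ2 i))
    -- fixed μ and γ, with γ_{1i} := 0
    (μ : Fin (m + 1) → ℝ) (γ : Fin (S + 2) → Fin (m + 1) → ℝ)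
    (hγ1 : ∀ i, γ 0 i = 0)
    -- the negative log-likelihood as a function of d
    (l : ((s : Fin (S + 2)) → Fin (ns s + 1) → ℝ) → ℝ)
    (hl : ∀ d, l d = ∑ i, (1 / (2 * σ2 i)) *
      ∑ s, ∑ j, (x s i j - μ i - γ s i - d s j) ^ 2)
    -- the claimed minimizer
    (dopt : (s : Fin (S + 2)) → Fin (ns s + 1) → ℝ)
    (hdopt : ∀ s j, dopt s j =
      (∑ i, (x s i j - μ i - γ s i) / σ2 i) / (∑ i, 1 / σ2 i)) :
    (∀ dt : (s : Fin (S + 2)) → Fin (ns s + 1) → ℝ, dt ≠ dopt → l dopt < l dt) ∧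
    (∀ s j, dopt s j - dopt s 0 = d' s j) := by
  have hσ2ne : ∀ i, σ2 i ≠ 0 := fun i => (hσ2 i).ne'
  set W : ℝ := ∑ i, 1 / σ2 i with hW
  have hWpos : 0 < W := Finset.sum_pos (fun i _ => one_div_pos.mpr (hσ2 i)) Finset.univ_nonempty
  -- rewrite l as sum over (s, j) of inner sums over i
  have hl' : ∀ d, l d = ∑ s, ∑ j, ∑ i : Fin (m + 1),
      (1 / (2 * σ2 i)) * (x s i j - μ i - γ s i - d s j) ^ 2 := by
    intro d
    rw [hl d]
    simp_rw [Finset.mul_sum]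
    rw [Finset.sum_comm]
    exact Finset.sum_congr rfl fun s _ => Finset.sum_comm
  -- key pointwise identity
  have key : ∀ (s : Fin (S + 2)) (j : Fin (ns s + 1)) (t : ℝ),
      (∑ i : Fin (m + 1), (1 / (2 * σ2 i)) * (x s i j - μ i - γ s i - t) ^ 2)
        = (∑ i : Fin (m + 1), (1 / (2 * σ2 i)) * (x s i j - μ i - γ s i - dopt s j) ^ 2)
          + (W / 2) * (t - dopt s j) ^ 2 := by
    intro s j t
    have hsum : ∑ i, (x s i j - μ i - γ s i) / σ2 i = dopt s j * W := by
      rw [hdopt s j, div_mul_cancel₀ _ hWpos.ne']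
    have expand : ∀ i ∈ Finset.univ, ∀ (_ : True),
        (1 / (2 * σ2 i)) * (x s i j - μ i - γ s i - t) ^ 2
          = (1 / (2 * σ2 i)) * (x s i j - μ i - γ s i - dopt s j) ^ 2
            + (dopt s j - t) * ((x s i j - μ i - γ s i) / σ2 i)
            - (dopt s j - t) * (t + dopt s j) * ((1 / σ2 i) / 2) := by
      intro i _ _
      have h := hσ2ne i
      field_simp
      ring
    have hstep : (∑ i : Fin (m + 1), (1 / (2 * σ2 i)) * (x s i j - μ i - γ s i - t) ^ 2)
        = (∑ i : Fin (m + 1), (1 / (2 * σ2 i)) * (x s i j - μ i - γ s i - dopt s j) ^ 2)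
          + (dopt s j - t) * (∑ i, (x s i j - μ i - γ s i) / σ2 i)
          - (dopt s j - t) * (t + dopt s j) * (W / 2) := by
      calc (∑ i : Fin (m + 1), (1 / (2 * σ2 i)) * (x s i j - μ i - γ s i - t) ^ 2)
          = ∑ i : Fin (m + 1),
              ((1 / (2 * σ2 i)) * (x s i j - μ i - γ s i - dopt s j) ^ 2
                + (dopt s j - t) * ((x s i j - μ i - γ s i) / σ2 i)
                - (dopt s j - t) * (t + dopt s j) * ((1 / σ2 i) / 2)) :=
            Finset.sum_congr rfl fun i hi => expand i hi trivial
        _ = _ := by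
            rw [Finset.sum_sub_distrib, Finset.sum_add_distrib, ← Finset.mul_sum,
              ← Finset.mul_sum, ← Finset.sum_div]
    rw [hstep, hsum]
    ring
  constructor
  · intro dt hne
    have hdiff : l dt = l dopt + ∑ s, ∑ j, (W / 2) * (dt s j - dopt s j) ^ 2 := by
      rw [hl' dt, hl' dopt, ← Finset.sum_add_distrib]
      refine Finset.sum_congr rfl fun s _ => ?_
      rw [← Finset.sum_add_distrib]
      refine Finset.sum_congr rfl fun j _ => ?_
      rw [key s j (dt s j)]
    rw [hdiff]
    have hpos : 0 < ∑ s, ∑ j, (W / 2) * (dt s j - dopt s j) ^ 2 := by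
      obtain ⟨s₀, hs₀⟩ := Function.ne_iff.mp hne
      obtain ⟨j₀, hj₀⟩ := Function.ne_iff.mp hs₀
      refine Finset.sum_pos' (fun s _ => Finset.sum_nonneg fun j _ => by positivity)
        ⟨s₀, Finset.mem_univ s₀, ?_⟩
      refine Finset.sum_pos' (fun j _ => by positivity) ⟨j₀, Finset.mem_univ j₀, ?_⟩
      have : dt s₀ j₀ - dopt s₀ j₀ ≠ 0 := sub_ne_zero_of_ne hj₀
      positivity
    linarith
  · intro s j
    rw [hdopt s j, hdopt s 0, hd' s j, div_sub_div_same, ← Finset.sum_sub_distrib]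
    congr 1
    refine Finset.sum_congr rfl fun i _ => ?_
    rw [div_sub_div_same]
    ring_nf
end

section
/- Fix (d₂,…,d_S) ∈ ℝ^{S−1}, set d₁ := 0, d_{1j} := d'_{1j}, and d_{sj} := d_s + d'_{sj} for s = 2,…,S. For a gene i, define h_i(μ_i, γ_{2i},…,γ_{Si}) = (1/(2σ_i²)) [ Σ_{j=1}^{n₁} (x_{1ij} − μ_i − d_{1j})² + Σ_{s=2}^S Σ_{j=1}^{n_s} (x_{sij} − μ_i − γ_{si} − d_{sj})² ]. Then the difference between the constrained minimum min_{μ_i ∈ ℝ} h_i(μ_i, 0,…,0) and the unconstrained minimum min_{(μ_i,γ) ∈ ℝ^S} h_i(μ_i, γ_{2i},…,γ_{Si}) equals g_i(d₂,…,d_S) = (1/(2σ_i²)) { Σ_{s=1}^S n_s (μ'_{si} − d_s)² − (1/n) [ Σ_{s=1}^S n_s (μ'_{si} − d_s) ]² }. -/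
/-!
With `y s j = x s i j - d s j`, the function `h_i` is `1 / (2 σ_i²)` times
`∑ s, ∑ j, (y s j - p s) ^ 2`, where `p 0 = μ_i` and `p s = μ_i + γ_{s i}` otherwise.
Without the constraint the `p s` range independently over `ℝ`, so the minimum is the
within-group sum of squares. With `γ = 0` all `p s` equal `μ_i`, and the analysis-of-variance
identity adds the between-group term `∑ s, n_s (ȳ_s - μ_i) ^ 2`, whose minimum over `μ_i` is
`∑ s, n_s ȳ_s ² - (∑ s, n_s ȳ_s) ^ 2 / n`. Since `ȳ_s = μ'_{s i} - d_s`, this is `g_i`.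
-/

open Finset

section WeightedLeastSquares

variable {ι : Type*} [Fintype ι]

noncomputable def weightedSumSqDev (w a : ι → ℝ) : ℝ :=
  ∑ k, w k * a k ^ 2 - (∑ k, w k * a k) ^ 2 / ∑ k, w k

theorem sum_mul_sub_sq_eq_weightedSumSqDev_add (w a : ι → ℝ) (hw : ∑ k, w k ≠ 0)
    (t : ℝ) :
    ∑ k, w k * (a k - t) ^ 2 =
      weightedSumSqDev w a + (∑ k, w k) * ((∑ k, w k * a k) / ∑ k, w k - t) ^ 2 := by
  have expand : ∑ k, w k * (a k - t) ^ 2 =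
      ∑ k, w k * a k ^ 2 - 2 * t * ∑ k, w k * a k + t ^ 2 * ∑ k, w k := by
    simp only [mul_sum, ← sum_sub_distrib, ← sum_add_distrib]
    exact sum_congr rfl fun k _ => by ring
  rw [expand, weightedSumSqDev]
  field_simp
  ring

theorem isLeast_weightedSumSqDev (w a : ι → ℝ) (hw : 0 < ∑ k, w k) :
    IsLeast (Set.range fun t => ∑ k, w k * (a k - t) ^ 2) (weightedSumSqDev w a) := by
  simp only [sum_mul_sub_sq_eq_weightedSumSqDev_add w a hw.ne']
  refine ⟨⟨(∑ k, w k * a k) / ∑ k, w k, by simp⟩, ?_⟩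
  rintro _ ⟨t, rfl⟩
  simp only [le_add_iff_nonneg_right]
  positivity

end WeightedLeastSquares

section GroupedLeastSquares

variable {σ : Type*} {κ : σ → Type*} [∀ s, Fintype (κ s)]

noncomputable def groupMean (y : (s : σ) → κ s → ℝ) (s : σ) : ℝ :=
  (∑ j, y s j) / Fintype.card (κ s)

variable [∀ s, Nonempty (κ s)] (y : (s : σ) → κ s → ℝ)

theorem groupMean_sub (b : σ → ℝ) (s : σ) :
    groupMean (fun s j => y s j - b s) s = groupMean y s - b s := by
  simp only [groupMean, sum_sub_distrib, sum_const, card_univ, nsmul_eq_mul]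
  field_simp

variable [Fintype σ]

theorem sum_sum_sub_sq_eq (p : σ → ℝ) :
    ∑ s, ∑ j, (y s j - p s) ^ 2 =
      ∑ s, (weightedSumSqDev 1 (y s) + Fintype.card (κ s) * (groupMean y s - p s) ^ 2) := by
  refine sum_congr rfl fun s _ => ?_
  have hcard : ∑ _j : κ s, (1 : ℝ) = Fintype.card (κ s) := by simp
  have := sum_mul_sub_sq_eq_weightedSumSqDev_add 1 (y s) (by simp) (p s)
  simp only [Pi.one_apply, one_mul, hcard] at this
  exact this

theorem isLeast_sum_sum_sub_sq :
    IsLeast (Set.range fun p : σ → ℝ => ∑ s, ∑ j, (y s j - p s) ^ 2)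
      (∑ s, weightedSumSqDev 1 (y s)) := by
  simp only [sum_sum_sub_sq_eq]
  refine ⟨⟨groupMean y, by simp⟩, ?_⟩
  rintro _ ⟨p, rfl⟩
  exact sum_le_sum fun s _ => le_add_of_nonneg_right (by positivity)

theorem isLeast_sum_sum_sub_sq_const [Nonempty σ] :
    IsLeast (Set.range fun t => ∑ s, ∑ j, (y s j - t) ^ 2)
      (∑ s, weightedSumSqDev 1 (y s) +
        weightedSumSqDev (fun s => Fintype.card (κ s)) (groupMean y)) := by
  have hbetween := isLeast_weightedSumSqDev (fun s => (Fintype.card (κ s) : ℝ)) (groupMean y)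
    (sum_pos (fun s _ => by positivity) univ_nonempty)
  simp only [sum_sum_sub_sq_eq, sum_add_distrib]
  have := (monotone_id.const_add (∑ s, weightedSumSqDev 1 (y s))).map_isLeast hbetween
  rwa [← Set.range_comp, Function.comp_def] at this

end GroupedLeastSquares

theorem Fin.exists_cons_add_eq {k : ℕ} {G : Type*} [AddGroup G] (p : Fin (k + 1) → G) :
    ∃ (μ : G) (γ : Fin k → G), (Fin.cons μ fun s => μ + γ s : Fin (k + 1) → G) = p :=
  ⟨p 0, fun s => -p 0 + p s.succ, by
    simp only [add_neg_cancel_left, ← Fin.tail_def, Fin.cons_self_tail]⟩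

theorem constrained_minus_unconstrained_equals_g_general
    (S m : ℕ) (ns : Fin (S + 2) → ℕ)
    (x : (s : Fin (S + 2)) → Fin (m + 1) → Fin (ns s + 1) → ℝ)
    (σ2 : Fin (m + 1) → ℝ) (hσ2 : ∀ i, 0 < σ2 i)
    (n : ℝ) (hn : n = ∑ s, ((ns s : ℝ) + 1))
    (d' : (s : Fin (S + 2)) → Fin (ns s + 1) → ℝ)
    (μ' : Fin (S + 2) → Fin (m + 1) → ℝ)
    (hμ' : ∀ s i, μ' s i = (∑ j, (x s i j - d' s j)) / ((ns s : ℝ) + 1))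
    (g : Fin (m + 1) → (Fin (S + 2) → ℝ) → ℝ)
    (hg : ∀ i dvv, g i dvv = (1 / (2 * σ2 i)) *
      ((∑ s, ((ns s : ℝ) + 1) * (μ' s i - dvv s) ^ 2)
        - (1 / n) * (∑ s, ((ns s : ℝ) + 1) * (μ' s i - dvv s)) ^ 2))
    -- fixed (d₁, d₂, …, d_S) with d₁ = 0, and the induced d_{sj}
    (dv : Fin (S + 2) → ℝ)
    (d : (s : Fin (S + 2)) → Fin (ns s + 1) → ℝ)
    (hd : ∀ s j, d s j = dv s + d' s j)
    -- a fixed gene i and its residual sum of squares h_i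
    (i : Fin (m + 1))
    (h : ℝ → (Fin (S + 1) → ℝ) → ℝ)
    (hh : ∀ μi γv, h μi γv = (1 / (2 * σ2 i)) *
      ((∑ j, (x 0 i j - μi - d 0 j) ^ 2)
        + ∑ s : Fin (S + 1), ∑ j, (x s.succ i j - μi - γv s - d s.succ j) ^ 2)) :
    ∃ a b : ℝ,
      IsLeast {v : ℝ | ∃ μi : ℝ, v = h μi (fun _ => 0)} a ∧
      IsLeast {v : ℝ | ∃ (μi : ℝ) (γv : Fin (S + 1) → ℝ), v = h μi γv} b ∧
      a - b = g i dv := by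
  set c := 1 / (2 * σ2 i)
  have hc : Monotone (c * ·) := monotone_mul_left_of_nonneg (by have := hσ2 i; positivity)
  set y : (s : Fin (S + 2)) → Fin (ns s + 1) → ℝ := fun s j => x s i j - d s j
  set F : (Fin (S + 2) → ℝ) → ℝ := fun p => ∑ s, ∑ j, (y s j - p s) ^ 2
  have hF : ∀ μi γv, h μi γv = c * F (Fin.cons μi fun s => μi + γv s) := by
    intro μi γv
    simp only [hh, F, y, Fin.sum_univ_succ (f := fun s => ∑ j, _), Fin.cons_zero, Fin.cons_succ]
    congr 2 <;> simp only [sub_sub, add_comm]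
  have hcons : ∀ t : ℝ, (Fin.cons t fun _ => t : Fin (S + 2) → ℝ) = fun _ => t :=
    fun t => Fin.cons_self_tail (fun _ => t)
  have hcon :
      {v | ∃ μi, v = h μi (fun _ => 0)} = (c * ·) '' Set.range fun t => F fun _ => t := by
    ext v
    simp only [hF, add_zero, hcons]
    constructor
    · rintro ⟨t, rfl⟩; exact ⟨_, ⟨t, rfl⟩, rfl⟩
    · rintro ⟨_, ⟨t, rfl⟩, rfl⟩; exact ⟨t, rfl⟩
  have hunc : {v | ∃ μi γv, v = h μi γv} = (c * ·) '' Set.range F := by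
    ext v
    constructor
    · rintro ⟨μi, γv, rfl⟩; exact ⟨_, ⟨_, rfl⟩, (hF μi γv).symm⟩
    · rintro ⟨_, ⟨p, rfl⟩, rfl⟩
      obtain ⟨μi, γv, rfl⟩ := Fin.exists_cons_add_eq p
      exact ⟨μi, γv, (hF μi γv).symm ▸ rfl⟩
  have hmean : groupMean y = fun s => μ' s i - dv s := by
    have hy : y = fun s j => (x s i j - d' s j) - dv s := by
      ext s j; simp only [y, hd]; ring
    ext s
    rw [hy, groupMean_sub, groupMean, hμ', Fintype.card_fin, Nat.cast_add, Nat.cast_one]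
  refine ⟨_, _, hcon ▸ hc.map_isLeast (isLeast_sum_sum_sub_sq_const y),
    hunc ▸ hc.map_isLeast (isLeast_sum_sum_sub_sq y), ?_⟩
  rw [hg, ← mul_sub, add_sub_cancel_left, weightedSumSqDev, hmean]
  simp only [Fintype.card_fin, Nat.cast_add, Nat.cast_one, ← hn]
  ring

theorem constrained_minus_unconstrained_equals_g
    (S m : ℕ) (ns : Fin (S + 2) → ℕ)
    (x : (s : Fin (S + 2)) → Fin (m + 1) → Fin (ns s + 1) → ℝ)
    (σ2 : Fin (m + 1) → ℝ) (hσ2 : ∀ i, 0 < σ2 i)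
    (n : ℝ) (hn : n = ∑ s, ((ns s : ℝ) + 1))
    (d' : (s : Fin (S + 2)) → Fin (ns s + 1) → ℝ)
    (hd' : ∀ s j, d' s j = (∑ i, (x s i j - x s i 0) / σ2 i) / (∑ i, 1 / σ2 i))
    (μ' : Fin (S + 2) → Fin (m + 1) → ℝ)
    (hμ' : ∀ s i, μ' s i = (∑ j, (x s i j - d' s j)) / ((ns s : ℝ) + 1))
    (g : Fin (m + 1) → (Fin (S + 2) → ℝ) → ℝ)
    (hg : ∀ i dvv, g i dvv = (1 / (2 * σ2 i)) *
      ((∑ s, ((ns s : ℝ) + 1) * (μ' s i - dvv s) ^ 2)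
        - (1 / n) * (∑ s, ((ns s : ℝ) + 1) * (μ' s i - dvv s)) ^ 2))
    -- fixed (d₁, d₂, …, d_S) with d₁ = 0, and the induced d_{sj}
    (dv : Fin (S + 2) → ℝ) (hdv0 : dv 0 = 0)
    (d : (s : Fin (S + 2)) → Fin (ns s + 1) → ℝ)
    (hd : ∀ s j, d s j = dv s + d' s j)
    -- a fixed gene i and its residual sum of squares h_i
    (i : Fin (m + 1))
    (h : ℝ → (Fin (S + 1) → ℝ) → ℝ)
    (hh : ∀ μi γv, h μi γv = (1 / (2 * σ2 i)) *
      ((∑ j, (x 0 i j - μi - d 0 j) ^ 2)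
        + ∑ s : Fin (S + 1), ∑ j, (x s.succ i j - μi - γv s - d s.succ j) ^ 2)) :
    ∃ a b : ℝ,
      IsLeast {v : ℝ | ∃ μi : ℝ, v = h μi (fun _ => 0)} a ∧
      IsLeast {v : ℝ | ∃ (μi : ℝ) (γv : Fin (S + 1) → ℝ), v = h μi γv} b ∧
      a - b = g i dv :=
  constrained_minus_unconstrained_equals_g_general S m ns x σ2 hσ2 n hn d' μ' hμ' g hg dv d hd i h
    hh
end

section
/- The function G : ℝ^{S−1} → ℝ defined by G(d₂,…,d_S) = Σ_{i=1}^m min(g_i(d₂,…,d_S), α_i) is continuous, satisfies G ≤ Σ_{i=1}^m α_i everywhere, and attains its global minimum at some point of ℝ^{S−1}. -/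
lemma quad_key {k : ℕ} (w y : Fin k → ℝ) (hw : ∀ s, 0 ≤ w s) (t u : Fin k) (htu : t ≠ u) :
    2 * (w t * w u * (y t - y u) ^ 2) ≤
      2 * ((∑ s, w s) * (∑ s, w s * y s ^ 2) - (∑ s, w s * y s) ^ 2) := by
  have hnn : ∀ s v : Fin k, 0 ≤ w s * w v * (y s - y v) ^ 2 := fun s v =>
    mul_nonneg (mul_nonneg (hw s) (hw v)) (sq_nonneg _)
  have hid : ∑ s, ∑ v, w s * w v * (y s - y v) ^ 2 =
      2 * ((∑ s, w s) * (∑ s, w s * y s ^ 2) - (∑ s, w s * y s) ^ 2) := by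
    calc ∑ s, ∑ v, w s * w v * (y s - y v) ^ 2
        = ∑ s, ∑ v, ((w s * y s ^ 2) * w v + w s * (w v * y v ^ 2)
            - (2 * (w s * y s)) * (w v * y v)) := by
          refine Finset.sum_congr rfl fun s _ => Finset.sum_congr rfl fun v _ => by ring
      _ = ∑ s, ((w s * y s ^ 2) * (∑ v, w v) + w s * (∑ v, w v * y v ^ 2)
            - (2 * (w s * y s)) * (∑ v, w v * y v)) := by
          refine Finset.sum_congr rfl fun s _ => ?_
          rw [Finset.sum_sub_distrib, Finset.sum_add_distrib, ← Finset.mul_sum,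
            ← Finset.mul_sum, ← Finset.mul_sum]
      _ = (∑ s, w s * y s ^ 2) * (∑ v, w v) + (∑ s, w s) * (∑ v, w v * y v ^ 2)
            - (∑ s, 2 * (w s * y s)) * (∑ v, w v * y v) := by
          rw [Finset.sum_sub_distrib, Finset.sum_add_distrib, ← Finset.sum_mul,
            ← Finset.sum_mul, ← Finset.sum_mul]
      _ = 2 * ((∑ s, w s) * (∑ s, w s * y s ^ 2) - (∑ s, w s * y s) ^ 2) := by
          rw [← Finset.mul_sum]; ring
  set f : Fin k → ℝ := fun s => ∑ v, w s * w v * (y s - y v) ^ 2 with hf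
  have hfnn : ∀ s, 0 ≤ f s := fun s => Finset.sum_nonneg fun v _ => hnn s v
  have h1 : w t * w u * (y t - y u) ^ 2 ≤ f t :=
    Finset.single_le_sum (f := fun v => w t * w v * (y t - y v) ^ 2)
      (fun v _ => hnn t v) (Finset.mem_univ u)
  have h2 : w u * w t * (y u - y t) ^ 2 ≤ f u :=
    Finset.single_le_sum (f := fun v => w u * w v * (y u - y v) ^ 2)
      (fun v _ => hnn u v) (Finset.mem_univ t)
  have h3 : f t + f u ≤ ∑ s, f s := by
    have := Finset.sum_le_sum_of_subset_of_nonneg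
      (Finset.subset_univ ({t, u} : Finset (Fin k))) (fun s _ _ => hfnn s)
    rwa [Finset.sum_pair htu] at this
  have hsq : (y u - y t) ^ 2 = (y t - y u) ^ 2 := by ring
  rw [hsq] at h2
  nlinarith [h1, h2, h3, hid]

/- STATEMENT 6 -/
theorem G_continuous_bounded_attains_min
    (S m : ℕ) (ns : Fin (S + 2) → ℕ)
    (x : (s : Fin (S + 2)) → Fin (m + 1) → Fin (ns s + 1) → ℝ)
    (σ2 α : Fin (m + 1) → ℝ)
    (hσ2 : ∀ i, 0 < σ2 i) (hα : ∀ i, 0 < α i)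
    (n : ℝ) (hn : n = ∑ s, ((ns s : ℝ) + 1))
    (d' : (s : Fin (S + 2)) → Fin (ns s + 1) → ℝ)
    (hd' : ∀ s j, d' s j = (∑ i, (x s i j - x s i 0) / σ2 i) / (∑ i, 1 / σ2 i))
    (μ' : Fin (S + 2) → Fin (m + 1) → ℝ)
    (hμ' : ∀ s i, μ' s i = (∑ j, (x s i j - d' s j)) / ((ns s : ℝ) + 1))
    (g : Fin (m + 1) → (Fin (S + 2) → ℝ) → ℝ)
    (hg : ∀ i dv, g i dv = (1 / (2 * σ2 i)) *
      ((∑ s, ((ns s : ℝ) + 1) * (μ' s i - dv s) ^ 2)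
        - (1 / n) * (∑ s, ((ns s : ℝ) + 1) * (μ' s i - dv s)) ^ 2))
    -- G as a function of the free coordinates (d₂, …, d_S) ∈ ℝ^{S-1}, with d₁ := 0
    (G : (Fin (S + 1) → ℝ) → ℝ)
    (hG : ∀ e, G e = ∑ i, min (g i (Fin.cons 0 e)) (α i)) :
    Continuous G ∧ (∀ e, G e ≤ ∑ i, α i) ∧ ∃ e0, ∀ e, G e0 ≤ G e := by
  -- basic positivity facts
  set w : Fin (S + 2) → ℝ := fun s => (ns s : ℝ) + 1 with hw
  have hw1 : ∀ s, (1 : ℝ) ≤ w s := fun s => by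
    simp only [hw]; exact le_add_of_nonneg_left (Nat.cast_nonneg _)
  have hw0 : ∀ s, (0 : ℝ) ≤ w s := fun s => le_trans zero_le_one (hw1 s)
  have hnpos : 0 < n := by
    rw [hn]
    exact Finset.sum_pos (fun s _ => by positivity) Finset.univ_nonempty
  -- continuity
  have hGfun : G = fun e => ∑ i, min (g i (Fin.cons 0 e)) (α i) := funext hG
  have hcons : Continuous (fun e : Fin (S + 1) → ℝ => (Fin.cons 0 e : Fin (S + 2) → ℝ)) := by
    apply continuous_pi
    intro s
    refine Fin.cases ?_ ?_ s
    · simpa using (continuous_const : Continuous fun _ : Fin (S + 1) → ℝ => (0 : ℝ))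
    · intro j
      simpa using continuous_apply j
  have hgc : ∀ i, Continuous (g i) := by
    intro i
    have : g i = fun dv => (1 / (2 * σ2 i)) *
        ((∑ s, ((ns s : ℝ) + 1) * (μ' s i - dv s) ^ 2)
          - (1 / n) * (∑ s, ((ns s : ℝ) + 1) * (μ' s i - dv s)) ^ 2) := funext (hg i)
    rw [this]
    apply continuous_const.mul
    apply Continuous.sub
    · exact continuous_finset_sum _ fun s _ =>
        continuous_const.mul ((continuous_const.sub (continuous_apply s)).pow 2)
    · exact continuous_const.mul
        ((continuous_finset_sum _ fun s _ =>
          continuous_const.mul (continuous_const.sub (continuous_apply s))).pow 2)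
  have hGcont : Continuous G := by
    rw [hGfun]
    exact continuous_finset_sum _ fun i _ => ((hgc i).comp hcons).min continuous_const
  -- bound
  have hbound : ∀ e, G e ≤ ∑ i, α i := by
    intro e
    rw [hG]
    exact Finset.sum_le_sum fun i _ => min_le_right _ _
  refine ⟨hGcont, hbound, ?_⟩
  -- lower bound on g along any free coordinate
  have hlow : ∀ (i : Fin (m + 1)) (dv : Fin (S + 2) → ℝ), dv 0 = 0 →
      ∀ t : Fin (S + 2), t ≠ 0 →
      (μ' 0 i - μ' t i + dv t) ^ 2 / (2 * σ2 i * n) ≤ g i dv := by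
    intro i dv hdv0 t ht
    rw [hg]
    set y : Fin (S + 2) → ℝ := fun s => μ' s i - dv s with hy
    have hkey := quad_key w y hw0 0 t (Ne.symm ht)
    have hwge : (1 : ℝ) ≤ w 0 * w t := one_le_mul_of_one_le_of_one_le (hw1 0) (hw1 t)
    have hc : (μ' 0 i - μ' t i + dv t) = y 0 - y t := by
      simp [hy, hdv0]; ring
    set A : ℝ := ∑ s, w s * y s ^ 2 with hA
    set B : ℝ := ∑ s, w s * y s with hB
    have hsum : (∑ s, w s) = n := hn.symm
    rw [hsum] at hkey
    have hD : (y 0 - y t) ^ 2 ≤ n * A - B ^ 2 := by nlinarith [sq_nonneg (y 0 - y t)]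
    rw [hc]
    have hσ := hσ2 i
    rw [div_le_iff₀ (by positivity)]
    have hexp : 1 / (2 * σ2 i) * (A - 1 / n * B ^ 2) * (2 * σ2 i * n) = n * A - B ^ 2 := by
      field_simp
    rw [hexp]
    exact hD
  -- threshold radius
  have hne : (Finset.univ : Finset (Fin (m + 1) × Fin (S + 2))).Nonempty := Finset.univ_nonempty
  set F : Fin (m + 1) × Fin (S + 2) → ℝ :=
    fun p => |μ' 0 p.1 - μ' p.2 p.1| + Real.sqrt (2 * σ2 p.1 * n * α p.1) with hF
  set R : ℝ := Finset.univ.sup' hne F with hR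
  have hR0 : 0 ≤ R := by
    refine le_trans ?_ (Finset.le_sup' F (Finset.mem_univ (0, 0)))
    simp only [hF]
    positivity
  -- outside the ball, every g i is at least α i
  have hout : ∀ (e : Fin (S + 1) → ℝ) (t' : Fin (S + 1)), R < |e t'| →
      ∀ i, α i ≤ g i (Fin.cons 0 e) := by
    intro e t' ht' i
    set dv : Fin (S + 2) → ℝ := Fin.cons 0 e with hdv
    have hdv0 : dv 0 = 0 := rfl
    have hdvt : dv t'.succ = e t' := rfl
    have hσ := hσ2 i
    have hαi := hα i
    have hRle : |μ' 0 i - μ' t'.succ i| + Real.sqrt (2 * σ2 i * n * α i) ≤ R :=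
      Finset.le_sup' F (Finset.mem_univ (i, t'.succ))
    set c : ℝ := μ' 0 i - μ' t'.succ i with hc
    have hs0 : (0 : ℝ) ≤ Real.sqrt (2 * σ2 i * n * α i) := Real.sqrt_nonneg _
    have habs : Real.sqrt (2 * σ2 i * n * α i) ≤ |c + e t'| := by
      have h1 : |e t'| - |c| ≤ |c + e t'| := by
        have := abs_sub_abs_le_abs_sub (e t') (-c)
        simpa [abs_neg, sub_neg_eq_add, add_comm] using this
      linarith
    have hsq : 2 * σ2 i * n * α i ≤ (c + e t') ^ 2 := by
      have h2 : Real.sqrt (2 * σ2 i * n * α i) ^ 2 ≤ |c + e t'| ^ 2 :=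
        pow_le_pow_left₀ hs0 habs 2
      rwa [Real.sq_sqrt (by positivity), sq_abs] at h2
    have hlow' := hlow i dv hdv0 t'.succ (Fin.succ_ne_zero t')
    rw [hdvt] at hlow'
    have hfinal : α i ≤ (c + e t') ^ 2 / (2 * σ2 i * n) := by
      rw [le_div_iff₀ (by positivity)]
      nlinarith
    exact le_trans hfinal hlow'
  -- minimum over the closed ball
  obtain ⟨e0, he0K, he0min⟩ :=
    (isCompact_closedBall (0 : Fin (S + 1) → ℝ) R).exists_isMinOn
      ⟨0, Metric.mem_closedBall_self hR0⟩ hGcont.continuousOn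
  refine ⟨e0, fun e => ?_⟩
  by_cases he : e ∈ Metric.closedBall (0 : Fin (S + 1) → ℝ) R
  · exact he0min he
  · have hex : ∃ t', R < |e t'| := by
      by_contra h
      push_neg at h
      apply he
      rw [Metric.mem_closedBall, dist_pi_le_iff hR0]
      intro t
      simpa [Real.dist_eq] using h t
    obtain ⟨t', ht'⟩ := hex
    have h1 : G e0 ≤ ∑ i, α i := hbound e0
    have h2 : (∑ i, α i) ≤ G e := by
      rw [hG]
      exact Finset.sum_le_sum fun i _ => le_min (hout e t' ht' i) le_rfl
    linarith
end

section
/- For a two-group comparison (S = 2), let λ_i = √(2nσ_i²α_i/(n₁n₂)). Then for every d ∈ ℝ and every gene i, the thresholding condition g_i(d) < α_i holds if and only if |μ'_{2i} − μ'_{1i} − d| < λ_i. -/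
/- STATEMENT 8 -/
theorem two_group_thresholding_condition
    (m n1 n2 : ℕ)
    (x1 : Fin (m + 1) → Fin (n1 + 1) → ℝ)
    (x2 : Fin (m + 1) → Fin (n2 + 1) → ℝ)
    (σ2 α : Fin (m + 1) → ℝ) (hσ2 : ∀ i, 0 < σ2 i) (hα : ∀ i, 0 < α i)
    (n : ℝ) (hn : n = ((n1 : ℝ) + 1) + ((n2 : ℝ) + 1))
    (d'1 : Fin (n1 + 1) → ℝ)
    (hd'1 : ∀ j, d'1 j = (∑ i, (x1 i j - x1 i 0) / σ2 i) / (∑ i, 1 / σ2 i))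
    (d'2 : Fin (n2 + 1) → ℝ)
    (hd'2 : ∀ j, d'2 j = (∑ i, (x2 i j - x2 i 0) / σ2 i) / (∑ i, 1 / σ2 i))
    (μ'1 μ'2 : Fin (m + 1) → ℝ)
    (hμ'1 : ∀ i, μ'1 i = (∑ j, (x1 i j - d'1 j)) / ((n1 : ℝ) + 1))
    (hμ'2 : ∀ i, μ'2 i = (∑ j, (x2 i j - d'2 j)) / ((n2 : ℝ) + 1))
    (g : Fin (m + 1) → ℝ → ℝ)
    (hg : ∀ i d, g i d = (1 / (2 * σ2 i)) *
      (((n1 : ℝ) + 1) * (μ'1 i) ^ 2 + ((n2 : ℝ) + 1) * (μ'2 i - d) ^ 2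
        - (1 / n) * (((n1 : ℝ) + 1) * μ'1 i + ((n2 : ℝ) + 1) * (μ'2 i - d)) ^ 2))
    (lam : Fin (m + 1) → ℝ)
    (hlam : ∀ i, lam i =
      Real.sqrt (2 * n * σ2 i * α i / (((n1 : ℝ) + 1) * ((n2 : ℝ) + 1)))) :
    ∀ (d : ℝ) (i : Fin (m + 1)), g i d < α i ↔ |μ'2 i - μ'1 i - d| < lam i := by
  intro d i
  set N1 : ℝ := (n1 : ℝ) + 1 with hN1
  set N2 : ℝ := (n2 : ℝ) + 1 with hN2
  have hN1pos : (0:ℝ) < N1 := by positivity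
  have hN2pos : (0:ℝ) < N2 := by positivity
  have hnpos : (0:ℝ) < n := by rw [hn]; positivity
  have hσ := hσ2 i
  have hαi := hα i
  have hgval : g i d = N1 * N2 / (2 * n * σ2 i) * (μ'2 i - μ'1 i - d) ^ 2 := by
    rw [hg i d, hn]
    field_simp
    ring
  have hc : (0:ℝ) < 2 * n * σ2 i * α i / (N1 * N2) := by positivity
  rw [hgval, hlam i]
  rw [show Real.sqrt (2 * n * σ2 i * α i / (N1 * N2))
      = Real.sqrt (2 * n * σ2 i * α i / (N1 * N2)) from rfl]
  rw [show (|μ'2 i - μ'1 i - d| < Real.sqrt (2 * n * σ2 i * α i / (N1 * N2)))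
      ↔ |μ'2 i - μ'1 i - d| ^ 2 < 2 * n * σ2 i * α i / (N1 * N2) from
    Real.lt_sqrt (abs_nonneg _)]
  rw [sq_abs]
  rw [div_mul_eq_mul_div, div_lt_iff₀ (by positivity : (0:ℝ) < 2 * n * σ2 i),
    lt_div_iff₀ (by positivity : (0:ℝ) < N1 * N2)]
  constructor <;> intro h <;> nlinarith [h]
end

section
/- Unit-freeness of the method: let a_{sj} ∈ ℝ (per-sample offsets) and b_i ∈ ℝ (per-gene offsets) be arbitrary, and let x̃_{sij} = x_{sij} + a_{sj} + b_i. Denote by d̃'_{sj}, μ̃'_{si}, g̃_i the quantities computed from x̃ by the same formulas. Then: (1) d̃'_{sj} = d'_{sj} + a_{sj} − a_{s1}; (2) μ̃'_{si} = μ'_{si} + a_{s1} + b_i; (3) for all (d₂,…,d_S) ∈ ℝ^{S−1}, and every gene i, g̃_i(d₂ + (a_{21} − a_{11}), …, d_S + (a_{S1} − a_{11})) = g_i(d₂,…,d_S); and (4) the corresponding fitted fold changes agree: μ̃'_{si} − μ̃'_{1i} − (d_s + a_{s1} − a_{11}) = μ'_{si} − μ'_{1i} − d_s for all s = 2,…,S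 and all i. -/
/- STATEMENT 12 -/
theorem unit_freeness
    (S m : ℕ) (ns : Fin (S + 2) → ℕ)
    (x : (s : Fin (S + 2)) → Fin (m + 1) → Fin (ns s + 1) → ℝ)
    (σ2 : Fin (m + 1) → ℝ) (hσ2 : ∀ i, 0 < σ2 i)
    (n : ℝ) (hn : n = ∑ s, ((ns s : ℝ) + 1))
    (d' : (s : Fin (S + 2)) → Fin (ns s + 1) → ℝ)
    (hd' : ∀ s j, d' s j = (∑ i, (x s i j - x s i 0) / σ2 i) / (∑ i, 1 / σ2 i))
    (μ' : Fin (S + 2) → Fin (m + 1) → ℝ)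
    (hμ' : ∀ s i, μ' s i = (∑ j, (x s i j - d' s j)) / ((ns s : ℝ) + 1))
    (g : Fin (m + 1) → (Fin (S + 2) → ℝ) → ℝ)
    (hg : ∀ i dv, g i dv = (1 / (2 * σ2 i)) *
      ((∑ s, ((ns s : ℝ) + 1) * (μ' s i - dv s) ^ 2)
        - (1 / n) * (∑ s, ((ns s : ℝ) + 1) * (μ' s i - dv s)) ^ 2))
    -- per-sample offsets a, per-gene offsets b, and the shifted data x̃
    (a : (s : Fin (S + 2)) → Fin (ns s + 1) → ℝ) (b : Fin (m + 1) → ℝ)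
    (xt : (s : Fin (S + 2)) → Fin (m + 1) → Fin (ns s + 1) → ℝ)
    (hxt : ∀ s i j, xt s i j = x s i j + a s j + b i)
    -- the quantities computed from x̃ by the same formulas
    (d't : (s : Fin (S + 2)) → Fin (ns s + 1) → ℝ)
    (hd't : ∀ s j, d't s j = (∑ i, (xt s i j - xt s i 0) / σ2 i) / (∑ i, 1 / σ2 i))
    (μ't : Fin (S + 2) → Fin (m + 1) → ℝ)
    (hμ't : ∀ s i, μ't s i = (∑ j, (xt s i j - d't s j)) / ((ns s : ℝ) + 1))
    (gt : Fin (m + 1) → (Fin (S + 2) → ℝ) → ℝ)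
    (hgt : ∀ i dv, gt i dv = (1 / (2 * σ2 i)) *
      ((∑ s, ((ns s : ℝ) + 1) * (μ't s i - dv s) ^ 2)
        - (1 / n) * (∑ s, ((ns s : ℝ) + 1) * (μ't s i - dv s)) ^ 2)) :
    -- (1)
    (∀ s j, d't s j = d' s j + a s j - a s 0) ∧
    -- (2)
    (∀ s i, μ't s i = μ' s i + a s 0 + b i) ∧
    -- (3) and (4), for every (d₁, d₂, …, d_S) with d₁ = 0
    (∀ dv : Fin (S + 2) → ℝ, dv 0 = 0 →
      (∀ i, gt i (fun s => dv s + a s 0 - a 0 0) = g i dv) ∧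
      (∀ (s : Fin (S + 1)) (i : Fin (m + 1)),
        μ't s.succ i - μ't 0 i - (dv s.succ + a s.succ 0 - a 0 0)
          = μ' s.succ i - μ' 0 i - dv s.succ)) := by

  have hσ : (0:ℝ) < ∑ i, 1 / σ2 i := by
    apply Finset.sum_pos
    · intro i _
      exact div_pos one_pos (hσ2 i)
    · exact Finset.univ_nonempty
  have hσne : (∑ i, 1 / σ2 i) ≠ 0 := ne_of_gt hσ
  have hnpos : (0:ℝ) < n := by
    rw [hn]
    apply Finset.sum_pos
    · intro s _
      positivity
    · exact Finset.univ_nonempty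
  have hnne : n ≠ 0 := ne_of_gt hnpos
  have h1 : ∀ s j, d't s j = d' s j + a s j - a s 0 := by
    intro s j
    rw [hd't, hd']
    have hsum : ∑ i, (xt s i j - xt s i 0) / σ2 i
        = (∑ i, (x s i j - x s i 0) / σ2 i) + (a s j - a s 0) * (∑ i, 1 / σ2 i) := by
      rw [Finset.mul_sum, ← Finset.sum_add_distrib]
      refine Finset.sum_congr rfl (fun i _ => ?_)
      rw [hxt, hxt]
      have := (hσ2 i).ne'
      field_simp
      ring
    rw [hsum]
    field_simp
    ring
  have hns : ∀ s : Fin (S+2), ((ns s : ℝ) + 1) ≠ 0 := by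
    intro s; positivity
  have h2 : ∀ s i, μ't s i = μ' s i + a s 0 + b i := by
    intro s i
    rw [hμ't, hμ']
    have hsum : ∑ j, (xt s i j - d't s j)
        = (∑ j, (x s i j - d' s j)) + ((ns s : ℝ) + 1) * (a s 0 + b i) := by
      have : ∀ j : Fin (ns s + 1), xt s i j - d't s j
          = (x s i j - d' s j) + (a s 0 + b i) := by
        intro j
        rw [hxt, h1]
        ring
      rw [Finset.sum_congr rfl (fun j _ => this j), Finset.sum_add_distrib,
        Finset.sum_const, Finset.card_univ, Fintype.card_fin]
      push_cast
      ring
    rw [hsum]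
    field_simp
    ring
  refine ⟨h1, h2, ?_⟩
  intro dv hdv0
  constructor
  · intro i
    rw [hgt, hg]
    have hterm : ∀ s : Fin (S+2),
        μ't s i - (dv s + a s 0 - a 0 0) = (μ' s i - dv s) + (b i + a 0 0) := by
      intro s
      rw [h2]
      ring
    set c := b i + a 0 0 with hc
    set y : Fin (S+2) → ℝ := fun s => μ' s i - dv s with hy
    have hA : (∑ s, ((ns s : ℝ) + 1) * (μ't s i - (dv s + a s 0 - a 0 0)) ^ 2)
        = (∑ s, ((ns s : ℝ) + 1) * (y s) ^ 2)
          + 2 * c * (∑ s, ((ns s : ℝ) + 1) * y s) + c ^ 2 * n := by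
      rw [hn, Finset.mul_sum, Finset.mul_sum, ← Finset.sum_add_distrib,
        ← Finset.sum_add_distrib]
      refine Finset.sum_congr rfl (fun s _ => ?_)
      rw [hterm s]
      ring
    have hB : (∑ s, ((ns s : ℝ) + 1) * (μ't s i - (dv s + a s 0 - a 0 0)))
        = (∑ s, ((ns s : ℝ) + 1) * y s) + c * n := by
      rw [hn, Finset.mul_sum, ← Finset.sum_add_distrib]
      refine Finset.sum_congr rfl (fun s _ => ?_)
      rw [hterm s]
      ring
    rw [hA, hB]
    field_simp
    ring
  · intro s i
    rw [h2, h2]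
    ring
end
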